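/- arXiv:2410.20257 — 2 statements merged into one kernel-verified Lean document; each statement's English description precedes it below -/
import Mathlib

section
/- Let G be a finite connected simple graph with positive real edge weights. A cutset D of G is relevant if and only if D cannot be written as the symmetric difference of finitely many cutsets D₁, …, D_k each of which has weight strictly smaller than the weight of D. -/
open Finset
open scoped Classical
open scoped symmDiff

variable {V : Type*}

/-- The edge boundary `∂S`: the set of edges of `G` with exactly one endpoint in `S`. -/
noncomputable def edgeBoundary [Fintype V] [DecidableEq V] (G : SimpleGraph V) (S : Finset V) :
    Finset (Sym2 V) :=
  Finset.univ.filter fun e => e ∈ G.edgeSet ∧ ∃ u v, e = s(u, v) ∧ u ∈ S ∧ v ∉ S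

/-- A cutset of `G` is an edge boundary `∂S` with `∅ ≠ S ≠ V`. -/
def IsCutset [Fintype V] [DecidableEq V] (G : SimpleGraph V) (D : Finset (Sym2 V)) : Prop :=
  ∃ S : Finset V, S ≠ ∅ ∧ S ≠ Finset.univ ∧ D = edgeBoundary G S

/-- Symmetric difference of a finite family of edge sets: the set of edges occurring in an
odd number of members of the family. -/
noncomputable def symmDiffFamily [Fintype V] [DecidableEq V] {ι : Type*} (s : Finset ι)
    (f : ι → Finset (Sym2 V)) : Finset (Sym2 V) :=
  Finset.univ.filter fun e => Odd ((s.filter fun i => e ∈ f i).card)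

/-- A cut basis: a family of `n - 1` cutsets such that every element of the cut space is the
symmetric difference of a subfamily, and no nonempty subfamily has empty symmetric
difference. -/
def IsCutBasis [Fintype V] [DecidableEq V] (G : SimpleGraph V)
    (𝒟 : Finset (Finset (Sym2 V))) : Prop :=
  𝒟.card = Fintype.card V - 1 ∧
  (∀ D ∈ 𝒟, IsCutset G D) ∧
  (∀ S : Finset V, ∃ ℬ ⊆ 𝒟, edgeBoundary G S = symmDiffFamily ℬ id) ∧
  (∀ ℬ ⊆ 𝒟, ℬ.Nonempty → symmDiffFamily ℬ id ≠ ∅)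

/-- The weight `|D|` of an edge set `D`. -/
def weight (w : Sym2 V → ℝ) (D : Finset (Sym2 V)) : ℝ :=
  ∑ e ∈ D, w e

/-- A minimum cut basis: a cut basis of minimum total weight. -/
def IsMinCutBasis [Fintype V] [DecidableEq V] (G : SimpleGraph V) (w : Sym2 V → ℝ)
    (𝒟 : Finset (Finset (Sym2 V))) : Prop :=
  IsCutBasis G 𝒟 ∧
  ∀ 𝒟' : Finset (Finset (Sym2 V)), IsCutBasis G 𝒟' →
    ∑ D ∈ 𝒟, weight w D ≤ ∑ D ∈ 𝒟', weight w D

/-- A cutset is relevant if it belongs to at least one minimum cut basis. -/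
def IsRelevant [Fintype V] [DecidableEq V] (G : SimpleGraph V) (w : Sym2 V → ℝ)
    (D : Finset (Sym2 V)) : Prop :=
  ∃ 𝒟 : Finset (Finset (Sym2 V)), IsMinCutBasis G w 𝒟 ∧ D ∈ 𝒟

/-- A `u,v`-cut: a cutset of the form `∂S` with `u ∈ S` and `v ∉ S`. -/
def IsUVCut [Fintype V] [DecidableEq V] (G : SimpleGraph V) (u v : V)
    (D : Finset (Sym2 V)) : Prop :=
  ∃ S : Finset V, u ∈ S ∧ v ∉ S ∧ D = edgeBoundary G S

/-- A minimum-weight `u,v`-cut. -/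
def IsMinUVCut [Fintype V] [DecidableEq V] (G : SimpleGraph V) (w : Sym2 V → ℝ) (u v : V)
    (D : Finset (Sym2 V)) : Prop :=
  IsUVCut G u v D ∧ ∀ D' : Finset (Sym2 V), IsUVCut G u v D' → weight w D ≤ weight w D'

/-- A minimum `u,v`-cut with respect to unit weights (cardinality). -/
def IsMinUVCutCard [Fintype V] [DecidableEq V] (G : SimpleGraph V) (u v : V)
    (D : Finset (Sym2 V)) : Prop :=
  IsUVCut G u v D ∧ ∀ D' : Finset (Sym2 V), IsUVCut G u v D' → D.card ≤ D'.card


noncomputable def ind (X : Finset (Sym2 V)) : Sym2 V → ZMod 2 :=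
  fun e => if e ∈ X then 1 else 0

lemma ind_apply_eq_one {X : Finset (Sym2 V)} {e : Sym2 V} : ind X e = 1 ↔ e ∈ X := by
  unfold ind; split <;> simp_all

lemma ind_inj {X Y : Finset (Sym2 V)} (h : ind X = ind Y) : X = Y := by
  ext e
  rw [← ind_apply_eq_one, ← ind_apply_eq_one, h]

lemma ind_eq_zero {X : Finset (Sym2 V)} (h : ind X = 0) : X = ∅ := by
  ext e
  simp only [Finset.notMem_empty, iff_false]
  intro he
  have := ind_apply_eq_one.2 he
  rw [h] at this
  exact one_ne_zero this.symm

lemma filter_inst_irrel {α : Type*} (p : α → Prop) (h1 h2 : DecidablePred p) (s : Finset α) :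
    @Finset.filter α p h1 s = @Finset.filter α p h2 s := by
  ext x
  simp only [Finset.mem_filter]

lemma natCast_zmod2 (n : ℕ) : (n : ZMod 2) = if Odd n then 1 else 0 := by
  rcases Nat.even_or_odd n with h | h
  · obtain ⟨k, rfl⟩ := h
    rw [if_neg (Nat.not_odd_iff_even.mpr ⟨k, rfl⟩)]
    push_cast
    ring_nf
    simp [CharTwo.two_eq_zero]
  · obtain ⟨k, rfl⟩ := h
    rw [if_pos ⟨k, rfl⟩]
    push_cast
    ring_nf
    simp [CharTwo.two_eq_zero]

lemma ind_apply_eq_zero {X : Finset (Sym2 V)} {e : Sym2 V} : ind X e = 0 ↔ e ∉ X := by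
  unfold ind; split <;> simp_all

lemma my_sum_boole {ι : Type*} (s : Finset ι) (f : ι → Finset (Sym2 V)) (e : Sym2 V) :
    (∑ c ∈ s, ind (f c) e) = ((s.filter fun i => e ∈ f i).card : ZMod 2) := by
  classical
  induction s using Finset.induction_on with
  | empty => simp
  | @insert a s h ih =>
    rw [Finset.sum_insert h, ih, Finset.filter_insert]
    by_cases hp : e ∈ f a
    · rw [if_pos hp, Finset.card_insert_of_notMem (fun hc => h (Finset.mem_of_mem_filter _ hc)),
        ind_apply_eq_one.2 hp]
      push_cast
      ring
    · rw [if_neg hp, ind_apply_eq_zero.2 hp, zero_add]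

lemma ind_symmDiffFamily [Fintype V] [DecidableEq V] {ι : Type*} (s : Finset ι)
    (f : ι → Finset (Sym2 V)) (e : Sym2 V) :
    ind (symmDiffFamily s f) e = ∑ i ∈ s, ind (f i) e := by
  rw [my_sum_boole]
  simp only [ind, symmDiffFamily, Finset.mem_filter, Finset.mem_univ, true_and]
  rw [natCast_zmod2]
  congr 1
  congr 1
  congr 1
  exact filter_inst_irrel _ _ _ _


lemma sum_symmDiff_zmod2 {ι : Type*} [DecidableEq ι] (s t : Finset ι) (g : ι → ZMod 2) :
    ∑ i ∈ s ∆ t, g i = ∑ i ∈ s, g i + ∑ i ∈ t, g i := by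
  have h1 : s ∆ t = (s \ t) ∪ (t \ s) := rfl
  rw [h1, Finset.sum_union disjoint_sdiff_sdiff, ← Finset.sdiff_inter_self_left s t,
    ← Finset.sdiff_inter_self_left t s,
    Finset.sum_sdiff_eq_sub Finset.inter_subset_left,
    Finset.sum_sdiff_eq_sub Finset.inter_subset_left, Finset.inter_comm t s]
  ring_nf
  simp [CharTwo.two_eq_zero]

lemma mem_edgeBoundary [Fintype V] [DecidableEq V] (G : SimpleGraph V) (S : Finset V) (x y : V) :
    s(x,y) ∈ edgeBoundary G S ↔ G.Adj x y ∧ ((x ∈ S ∧ y ∉ S) ∨ (y ∈ S ∧ x ∉ S)) := by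
  unfold edgeBoundary
  simp only [Finset.mem_filter, Finset.mem_univ, true_and, SimpleGraph.mem_edgeSet]
  constructor
  · rintro ⟨h, u, v, huv, hu, hv⟩
    rw [Sym2.eq_iff] at huv
    rcases huv with ⟨rfl, rfl⟩ | ⟨rfl, rfl⟩
    · exact ⟨h, Or.inl ⟨hu, hv⟩⟩
    · exact ⟨h, Or.inr ⟨hu, hv⟩⟩
  · rintro ⟨h, ⟨hx, hy⟩ | ⟨hy, hx⟩⟩
    · exact ⟨h, x, y, rfl, hx, hy⟩
    · exact ⟨h, y, x, by rw [Sym2.eq_swap], hy, hx⟩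

lemma edgeBoundary_compl [Fintype V] [DecidableEq V] (G : SimpleGraph V) (S : Finset V) :
    edgeBoundary G (Finset.univ \ S) = edgeBoundary G S := by
  ext e
  induction e using Sym2.inductionOn with
  | _ x y =>
    rw [mem_edgeBoundary, mem_edgeBoundary]
    simp only [Finset.mem_sdiff, Finset.mem_univ, true_and, not_not]
    tauto

lemma walk_cross [Fintype V] [DecidableEq V] {G : SimpleGraph V} {S : Finset V}
    {u v : V} (p : G.Walk u v) (hu : u ∈ S) (hv : v ∉ S) :
    (edgeBoundary G S).Nonempty := by
  induction p with
  | nil => exact absurd hu hv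
  | @cons a b c h p ih =>
    by_cases hb : b ∈ S
    · exact ih hb hv
    · exact ⟨s(a,b), (mem_edgeBoundary G S a b).2 ⟨h, Or.inl ⟨hu, hb⟩⟩⟩

lemma edgeBoundary_nonempty [Fintype V] [DecidableEq V] {G : SimpleGraph V} (hG : G.Connected)
    {S : Finset V} (h1 : S ≠ ∅) (h2 : S ≠ Finset.univ) :
    (edgeBoundary G S).Nonempty := by
  obtain ⟨u, hu⟩ := Finset.nonempty_of_ne_empty h1
  obtain ⟨v, hv⟩ : ∃ v, v ∉ S := by
    by_contra h
    push_neg at h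
    exact h2 (Finset.eq_univ_iff_forall.2 h)
  obtain ⟨p⟩ := hG.preconnected u v
  exact walk_cross p hu hv

lemma ind_edgeBoundary_singletons [Fintype V] [DecidableEq V] (G : SimpleGraph V)
    (T : Finset V) (e : Sym2 V) :
    ind (edgeBoundary G T) e = ∑ v ∈ T, ind (edgeBoundary G {v}) e := by
  rw [my_sum_boole T (fun v => edgeBoundary G {v}) e]
  induction e using Sym2.inductionOn with
  | _ x y =>
    rw [filter_inst_irrel (fun v => s(x,y) ∈ edgeBoundary G {v}) _ (fun v => inferInstance) T]
    by_cases hadj : G.Adj x y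
    · have hxy : x ≠ y := G.ne_of_adj hadj
      have hfil : (T.filter fun v => s(x,y) ∈ edgeBoundary G {v}) = T ∩ {x, y} := by
        ext v
        simp only [Finset.mem_filter, Finset.mem_inter, Finset.mem_insert, Finset.mem_singleton,
          mem_edgeBoundary]
        constructor
        · rintro ⟨hv, -, ⟨h1, -⟩ | ⟨h1, -⟩⟩
          · exact ⟨hv, Or.inl h1.symm⟩
          · exact ⟨hv, Or.inr h1.symm⟩
        · rintro ⟨hv, rfl | rfl⟩
          · exact ⟨hv, hadj, Or.inl ⟨rfl, Ne.symm hxy⟩⟩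
          · exact ⟨hv, hadj, Or.inr ⟨rfl, hxy⟩⟩
      rw [hfil]
      by_cases hx : x ∈ T <;> by_cases hy : y ∈ T
      · have : T ∩ {x, y} = {x, y} := by
          rw [Finset.inter_eq_right.2 (by simp [Finset.insert_subset_iff, hx, hy])]
        rw [this, Finset.card_insert_of_notMem (by simpa using hxy), Finset.card_singleton]
        have h0 : ind (edgeBoundary G T) s(x,y) = 0 :=
          ind_apply_eq_zero.2 (by rw [mem_edgeBoundary]; tauto)
        rw [h0]
        decide
      · have : T ∩ {x, y} = {x} := by
          ext z
          simp only [Finset.mem_inter, Finset.mem_insert, Finset.mem_singleton]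
          constructor
          · rintro ⟨hz, rfl | rfl⟩
            · rfl
            · exact absurd hz hy
          · rintro rfl
            exact ⟨hx, Or.inl rfl⟩
        rw [this, Finset.card_singleton]
        have h1 : ind (edgeBoundary G T) s(x,y) = 1 :=
          ind_apply_eq_one.2 ((mem_edgeBoundary G T x y).2 ⟨hadj, Or.inl ⟨hx, hy⟩⟩)
        rw [h1]
        decide
      · have : T ∩ {x, y} = {y} := by
          ext z
          simp only [Finset.mem_inter, Finset.mem_insert, Finset.mem_singleton]
          constructor
          · rintro ⟨hz, rfl | rfl⟩
            · exact absurd hz hx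
            · rfl
          · rintro rfl
            exact ⟨hy, Or.inr rfl⟩
        rw [this, Finset.card_singleton]
        have h1 : ind (edgeBoundary G T) s(x,y) = 1 :=
          ind_apply_eq_one.2 ((mem_edgeBoundary G T x y).2 ⟨hadj, Or.inr ⟨hy, hx⟩⟩)
        rw [h1]
        decide
      · have : T ∩ {x, y} = ∅ := by
          ext z
          simp only [Finset.mem_inter, Finset.mem_insert, Finset.mem_singleton,
            Finset.notMem_empty, iff_false]
          rintro ⟨hz, rfl | rfl⟩
          exacts [hx hz, hy hz]
        rw [this, Finset.card_empty]
        have h0 : ind (edgeBoundary G T) s(x,y) = 0 :=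
          ind_apply_eq_zero.2 (by rw [mem_edgeBoundary]; tauto)
        rw [h0]
        decide
    · have h0 : ind (edgeBoundary G T) s(x,y) = 0 :=
        ind_apply_eq_zero.2 (by rw [mem_edgeBoundary]; tauto)
      have hfil : (T.filter fun v => s(x,y) ∈ edgeBoundary G {v}) = ∅ := by
        apply Finset.filter_false_of_mem
        intro v hv hmem
        exact hadj ((mem_edgeBoundary G {v} x y).1 hmem).1
      rw [h0, hfil, Finset.card_empty]
      decide

lemma ind_empty (e : Sym2 V) : ind (∅ : Finset (Sym2 V)) e = 0 :=
  ind_apply_eq_zero.2 (Finset.notMem_empty e)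

lemma eq_symmDiffFamily_iff [Fintype V] [DecidableEq V] {X : Finset (Sym2 V)}
    {ℬ : Finset (Finset (Sym2 V))} :
    X = symmDiffFamily ℬ id ↔ ∀ e, ind X e = ∑ B ∈ ℬ, ind B e := by
  constructor
  · rintro rfl e
    rw [ind_symmDiffFamily]
    rfl
  · intro h
    apply ind_inj
    funext e
    rw [h e, ← ind_symmDiffFamily]
    rfl

lemma basis_unique_repr [Fintype V] [DecidableEq V] {G : SimpleGraph V}
    {𝒟 ℬ₁ ℬ₂ : Finset (Finset (Sym2 V))} (h𝒟 : IsCutBasis G 𝒟)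
    (s1 : ℬ₁ ⊆ 𝒟) (s2 : ℬ₂ ⊆ 𝒟)
    (h : ∀ e, ∑ B ∈ ℬ₁, ind B e = ∑ B ∈ ℬ₂, ind B e) : ℬ₁ = ℬ₂ := by
  have hsub : ℬ₁ ∆ ℬ₂ ⊆ 𝒟 := by
    intro Y hY
    rw [Finset.mem_symmDiff] at hY
    rcases hY with ⟨h1, -⟩ | ⟨h2, -⟩
    exacts [s1 h1, s2 h2]
  by_contra hne
  have hnonempty : (ℬ₁ ∆ ℬ₂).Nonempty := by
    rw [Finset.nonempty_iff_ne_empty]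
    intro h0
    exact hne (symmDiff_eq_bot.1 h0)
  apply h𝒟.2.2.2 (ℬ₁ ∆ ℬ₂) hsub hnonempty
  symm
  rw [eq_symmDiffFamily_iff]
  intro e
  rw [ind_empty, sum_symmDiff_zmod2, h e, CharTwo.add_self_eq_zero]

lemma exchange_basis [Fintype V] [DecidableEq V] {G : SimpleGraph V}
    {𝒟 : Finset (Finset (Sym2 V))} (h𝒟 : IsCutBasis G 𝒟) {B X : Finset (Sym2 V)}
    (hB : B ∈ 𝒟) (hX : IsCutset G X) (hX𝒟 : X ∉ 𝒟) {ℬX : Finset (Finset (Sym2 V))}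
    (hsub : ℬX ⊆ 𝒟) (hrep : ∀ e, ind X e = ∑ C ∈ ℬX, ind C e) (hBX : B ∈ ℬX) :
    IsCutBasis G (insert X (𝒟.erase B)) := by
  have hXe : X ∉ 𝒟.erase B := fun h => hX𝒟 (Finset.mem_of_mem_erase h)
  have hXℬX : X ∉ ℬX := fun h => hX𝒟 (hsub h)
  have herase : ∀ {ℬ : Finset (Finset (Sym2 V))}, ℬ ⊆ 𝒟 → ℬ.erase X ⊆ 𝒟 := fun h =>
    (Finset.erase_subset _ _).trans h
  refine ⟨?_, ?_, ?_, ?_⟩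
  · rw [Finset.card_insert_of_notMem hXe, Finset.card_erase_of_mem hB,
      Nat.sub_add_cancel (Finset.card_pos.2 ⟨B, hB⟩), h𝒟.1]
  · intro D hD
    rcases Finset.mem_insert.1 hD with rfl | hD'
    · exact hX
    · exact h𝒟.2.1 D (Finset.mem_of_mem_erase hD')
  · intro S
    obtain ⟨ℬ, hℬsub, hℬrep⟩ := h𝒟.2.2.1 S
    have hre := eq_symmDiffFamily_iff.1 hℬrep
    by_cases hBmem : B ∈ ℬ
    · refine ⟨(ℬ.erase B) ∆ (insert X (ℬX.erase B)), ?_, eq_symmDiffFamily_iff.2 ?_⟩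
      · intro Y hY
        rw [Finset.mem_symmDiff] at hY
        rcases hY with ⟨h1, -⟩ | ⟨h2, -⟩
        · exact Finset.mem_insert_of_mem (Finset.erase_subset_erase _ hℬsub h1)
        · rcases Finset.mem_insert.1 h2 with rfl | h3
          · exact Finset.mem_insert_self _ _
          · exact Finset.mem_insert_of_mem (Finset.erase_subset_erase _ hsub h3)
      · intro e
        rw [sum_symmDiff_zmod2, Finset.sum_insert (fun h => hXℬX (Finset.mem_of_mem_erase h)),
          hrep e, hre e]
        have h1 : ∑ C ∈ ℬX, ind C e = ∑ C ∈ ℬX.erase B, ind C e + ind B e :=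
          (Finset.sum_erase_add _ _ hBX).symm
        have h2 : ∑ C ∈ ℬ, ind C e = ∑ C ∈ ℬ.erase B, ind C e + ind B e :=
          (Finset.sum_erase_add _ _ hBmem).symm
        rw [h1, h2]
        have hgen : ∀ a b c : ZMod 2, a + b = a + (c + b + c) := by decide
        exact hgen _ _ _
    · refine ⟨ℬ, ?_, hℬrep⟩
      intro Y hY
      exact Finset.mem_insert_of_mem (Finset.mem_erase.2 ⟨fun h => hBmem (h ▸ hY), hℬsub hY⟩)
  · intro ℬ hℬsub hne heq
    by_cases hXmem : X ∈ ℬ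
    · set 𝒞 := ℬX ∆ (ℬ.erase X) with h𝒞
      have h𝒞sub : 𝒞 ⊆ 𝒟 := by
        intro Y hY
        rw [h𝒞, Finset.mem_symmDiff] at hY
        rcases hY with ⟨h1, -⟩ | ⟨h2, -⟩
        · exact hsub h1
        · rcases Finset.mem_erase.1 h2 with ⟨hYX, hYℬ⟩
          rcases Finset.mem_insert.1 (hℬsub hYℬ) with rfl | h
          · exact absurd rfl hYX
          · exact Finset.mem_of_mem_erase h
      have hB𝒞 : B ∈ 𝒞 := by
        rw [h𝒞, Finset.mem_symmDiff]
        left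
        refine ⟨hBX, fun hc => ?_⟩
        rcases Finset.mem_erase.1 hc with ⟨hBX', hBℬ⟩
        rcases Finset.mem_insert.1 (hℬsub hBℬ) with rfl | h
        · exact hBX' rfl
        · exact (Finset.mem_erase.1 h).1 rfl
      apply h𝒟.2.2.2 𝒞 h𝒞sub ⟨B, hB𝒞⟩
      symm
      rw [eq_symmDiffFamily_iff]
      intro e
      rw [ind_empty, h𝒞, sum_symmDiff_zmod2, ← hrep e]
      have h3 : ∑ C ∈ ℬ.erase X, ind C e + ind X e = ∑ C ∈ ℬ, ind C e :=
        Finset.sum_erase_add _ _ hXmem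
      have h4 : ind (∅ : Finset (Sym2 V)) e = ∑ C ∈ ℬ, ind C e :=
        eq_symmDiffFamily_iff.1 heq.symm e
      rw [ind_empty] at h4
      rw [add_comm, h3, ← h4]
    · exact h𝒟.2.2.2 ℬ (fun Y hY => Finset.mem_of_mem_erase
        (by
          rcases Finset.mem_insert.1 (hℬsub hY) with rfl | h
          · exact absurd hY hXmem
          · exact h)) hne heq

lemma exists_cut_basis [Fintype V] [DecidableEq V] {G : SimpleGraph V} (hG : G.Connected) :
    ∃ 𝒟, IsCutBasis G 𝒟 := by
  obtain ⟨v₀⟩ := hG.nonempty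
  set φ : V → Finset (Sym2 V) := fun v => edgeBoundary G {v} with hφ
  have hinj : Set.InjOn φ (Finset.univ.erase v₀ : Finset V) := by
    intro a ha b hb hab
    by_contra hne'
    have ha' : a ≠ v₀ := (Finset.mem_erase.1 (by exact_mod_cast ha)).1
    have hb' : b ≠ v₀ := (Finset.mem_erase.1 (by exact_mod_cast hb)).1
    have hTne : ({a, b} : Finset V) ≠ Finset.univ := by
      intro h
      have hv₀ : v₀ ∈ ({a, b} : Finset V) := h ▸ Finset.mem_univ v₀
      rcases Finset.mem_insert.1 hv₀ with h' | h'
      · exact ha' h'.symm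
      · exact hb' (Finset.mem_singleton.1 h').symm
    have hTe : ({a, b} : Finset V) ≠ ∅ := Finset.insert_ne_empty _ _
    have hzero : edgeBoundary G ({a, b} : Finset V) = ∅ := by
      apply ind_inj
      funext e
      rw [ind_edgeBoundary_singletons, ind_empty,
        Finset.sum_insert (by simp [hne']), Finset.sum_singleton]
      have hab' : edgeBoundary G {a} = edgeBoundary G {b} := hab
      rw [hab', CharTwo.add_self_eq_zero]
    obtain ⟨e, he⟩ := edgeBoundary_nonempty hG hTe hTne
    rw [hzero] at he
    exact absurd he (Finset.notMem_empty e)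
  refine ⟨(Finset.univ.erase v₀).image φ, ?_, ?_, ?_, ?_⟩
  · rw [Finset.card_image_of_injOn hinj, Finset.card_erase_of_mem (Finset.mem_univ _),
      Finset.card_univ]
  · intro D hD
    obtain ⟨v, hv, rfl⟩ := Finset.mem_image.1 hD
    exact ⟨{v}, Finset.singleton_ne_empty v, fun h => (Finset.mem_erase.1 hv).1
      (Finset.mem_singleton.1 (h ▸ Finset.mem_univ v₀)).symm, rfl⟩
  · intro S
    by_cases hv₀ : v₀ ∈ S
    · set S' := Finset.univ \ S with hS'
      have hsub : S' ⊆ Finset.univ.erase v₀ := by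
        intro v hv
        rcases Finset.mem_sdiff.1 hv with ⟨-, hv2⟩
        exact Finset.mem_erase.2 ⟨fun h => hv2 (h ▸ hv₀), Finset.mem_univ v⟩
      refine ⟨S'.image φ, Finset.image_subset_image hsub, eq_symmDiffFamily_iff.2 fun e => ?_⟩
      rw [Finset.sum_image (fun a ha b hb hab => hinj (hsub ha) (hsub hb) hab)]
      rw [← edgeBoundary_compl G S, ← hS']
      exact ind_edgeBoundary_singletons G S' e
    · have hsub : S ⊆ Finset.univ.erase v₀ := by
        intro v hv
        exact Finset.mem_erase.2 ⟨fun h => hv₀ (h ▸ hv), Finset.mem_univ v⟩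
      refine ⟨S.image φ, Finset.image_subset_image hsub, eq_symmDiffFamily_iff.2 fun e => ?_⟩
      rw [Finset.sum_image (fun a ha b hb hab => hinj (hsub ha) (hsub hb) hab)]
      exact ind_edgeBoundary_singletons G S e
  · intro ℬ hℬsub hne heq
    set T := (Finset.univ.erase v₀).filter (fun v => φ v ∈ ℬ) with hT
    have himg : T.image φ = ℬ := by
      apply Finset.Subset.antisymm
      · intro B hB
        obtain ⟨v, hv, rfl⟩ := Finset.mem_image.1 hB
        exact (Finset.mem_filter.1 hv).2
      · intro B hB
        obtain ⟨v, hv, rfl⟩ := Finset.mem_image.1 (hℬsub hB)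
        exact Finset.mem_image.2 ⟨v, Finset.mem_filter.2 ⟨hv, hB⟩, rfl⟩
    have hTne : T ≠ ∅ := by
      obtain ⟨B, hB⟩ := hne
      obtain ⟨v, hv, rfl⟩ := Finset.mem_image.1 (hℬsub hB)
      exact Finset.ne_empty_of_mem (Finset.mem_filter.2 ⟨hv, hB⟩)
    have hTuniv : T ≠ Finset.univ := by
      intro h
      have : v₀ ∈ T := h ▸ Finset.mem_univ v₀
      exact (Finset.mem_erase.1 (Finset.mem_filter.1 this).1).1 rfl
    have hrepr : edgeBoundary G T = symmDiffFamily ℬ id := by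
      refine eq_symmDiffFamily_iff.2 fun e => ?_
      rw [← himg, Finset.sum_image (fun a ha b hb hab =>
        hinj (Finset.mem_filter.1 ha).1 (Finset.mem_filter.1 hb).1 hab)]
      exact ind_edgeBoundary_singletons G T e
    rw [heq] at hrepr
    obtain ⟨e, he⟩ := edgeBoundary_nonempty hG hTne hTuniv
    rw [hrepr] at he
    exact absurd he (Finset.notMem_empty e)

lemma exists_min_cut_basis [Fintype V] [DecidableEq V] {G : SimpleGraph V} (hG : G.Connected)
    (w : Sym2 V → ℝ) : ∃ 𝒟, IsMinCutBasis G w 𝒟 := by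
  obtain ⟨𝒟₀, h₀⟩ := exists_cut_basis hG
  obtain ⟨𝒟, h𝒟mem, hmin⟩ := Finset.exists_min_image
    (Finset.univ.filter fun 𝒟 => IsCutBasis G 𝒟) (fun 𝒟 => ∑ D ∈ 𝒟, weight w D)
    ⟨𝒟₀, Finset.mem_filter.2 ⟨Finset.mem_univ _, h₀⟩⟩
  exact ⟨𝒟, (Finset.mem_filter.1 h𝒟mem).2,
    fun 𝒟' h' => hmin 𝒟' (Finset.mem_filter.2 ⟨Finset.mem_univ _, h'⟩)⟩

theorem relevant_iff_main [Fintype V] [DecidableEq V]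
    (G : SimpleGraph V) (hG : G.Connected) (w : Sym2 V → ℝ)
    (hw : ∀ e ∈ G.edgeSet, 0 < w e) (D : Finset (Sym2 V)) (hD : IsCutset G D) :
    IsRelevant G w D ↔
      ¬ ∃ 𝒮 : Finset (Finset (Sym2 V)),
          (∀ C ∈ 𝒮, IsCutset G C ∧ weight w C < weight w D) ∧
          D = symmDiffFamily 𝒮 id := by
  constructor
  · rintro ⟨𝒟, ⟨h𝒟basis, h𝒟min⟩, hD𝒟⟩ ⟨𝒮, h𝒮, hDrep⟩
    have hrepC : ∀ C ∈ 𝒮, ∃ ℬ ⊆ 𝒟, ∀ e, ind C e = ∑ B ∈ ℬ, ind B e := by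
      intro C hC
      obtain ⟨S, -, -, rfl⟩ := (h𝒮 C hC).1
      obtain ⟨ℬ, hs, hr⟩ := h𝒟basis.2.2.1 S
      exact ⟨ℬ, hs, eq_symmDiffFamily_iff.1 hr⟩
    choose! ℬf hℬf1 hℬf2 using hrepC
    set ℬ' : Finset (Finset (Sym2 V)) :=
      𝒟.filter (fun B => Odd (𝒮.filter fun C => B ∈ ℬf C).card) with hℬ'
    have hkey : ∀ e, ∑ B ∈ ({D} : Finset (Finset (Sym2 V))), ind B e = ∑ B ∈ ℬ', ind B e := by
      intro e
      rw [Finset.sum_singleton]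
      have h1 : ind D e = ∑ C ∈ 𝒮, ind C e := eq_symmDiffFamily_iff.1 hDrep e
      have h2 : ∀ C ∈ 𝒮, ind C e = ∑ B ∈ 𝒟, if B ∈ ℬf C then ind B e else 0 := by
        intro C hC
        rw [hℬf2 C hC e]
        rw [Finset.sum_ite_mem, Finset.inter_eq_right.2 (hℬf1 C hC)]
      rw [h1, Finset.sum_congr rfl h2, Finset.sum_comm]
      have h3 : ∀ B ∈ 𝒟, (∑ C ∈ 𝒮, if B ∈ ℬf C then ind B e else 0)
          = if Odd (𝒮.filter fun C => B ∈ ℬf C).card then ind B e else 0 := by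
        intro B _
        rw [Finset.sum_ite, Finset.sum_const_zero, add_zero, Finset.sum_const, nsmul_eq_mul,
          natCast_zmod2]
        by_cases h : Odd (𝒮.filter fun C => B ∈ ℬf C).card
        · rw [if_pos h, if_pos h, one_mul]
        · rw [if_neg h, if_neg h, zero_mul]
      rw [Finset.sum_congr rfl h3, ← Finset.sum_filter]
    have hsing : ({D} : Finset (Finset (Sym2 V))) = ℬ' :=
      basis_unique_repr h𝒟basis (Finset.singleton_subset_iff.2 hD𝒟)
        (Finset.filter_subset _ _) hkey
    have hDℬ' : D ∈ ℬ' := hsing ▸ Finset.mem_singleton_self D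
    have hodd : Odd (𝒮.filter fun C => D ∈ ℬf C).card := (Finset.mem_filter.1 hDℬ').2
    have hpos : (𝒮.filter fun C => D ∈ ℬf C).Nonempty := by
      rw [Finset.nonempty_iff_ne_empty]
      intro h0
      rw [h0] at hodd
      simp at hodd
    obtain ⟨C, hC⟩ := hpos
    obtain ⟨hC𝒮, hDC⟩ := Finset.mem_filter.1 hC
    have hwC : weight w C < weight w D := (h𝒮 C hC𝒮).2
    have hCD : C ≠ D := fun h => absurd (h ▸ hwC) (lt_irrefl _)
    have hC𝒟 : C ∉ 𝒟 := by
      intro hmem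
      have : ({C} : Finset (Finset (Sym2 V))) = ℬf C :=
        basis_unique_repr h𝒟basis (Finset.singleton_subset_iff.2 hmem) (hℬf1 C hC𝒮)
          (fun e => by rw [Finset.sum_singleton, ← hℬf2 C hC𝒮 e])
      have : D ∈ ({C} : Finset (Finset (Sym2 V))) := this ▸ hDC
      exact hCD (Finset.mem_singleton.1 this).symm
    have hbasis' : IsCutBasis G (insert C (𝒟.erase D)) :=
      exchange_basis h𝒟basis hD𝒟 (h𝒮 C hC𝒮).1 hC𝒟 (hℬf1 C hC𝒮) (hℬf2 C hC𝒮) hDC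
    have hsum' : ∑ B ∈ insert C (𝒟.erase D), weight w B
        = weight w C + (∑ B ∈ 𝒟, weight w B - weight w D) := by
      rw [Finset.sum_insert (fun h => hC𝒟 (Finset.mem_of_mem_erase h))]
      congr 1
      have := Finset.sum_erase_add 𝒟 (weight w) hD𝒟
      linarith
    have hle := h𝒟min _ hbasis'
    rw [hsum'] at hle
    linarith
  · intro hno
    obtain ⟨𝒟, h𝒟⟩ := exists_min_cut_basis hG w
    by_cases hD𝒟 : D ∈ 𝒟
    · exact ⟨𝒟, h𝒟, hD𝒟⟩
    obtain ⟨S, hS1, hS2, rfl⟩ := hD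
    obtain ⟨ℬ, hs, hr⟩ := h𝒟.1.2.2.1 S
    have hℬne : ℬ.Nonempty := by
      rw [Finset.nonempty_iff_ne_empty]
      rintro rfl
      have : edgeBoundary G S = ∅ := by
        apply ind_inj
        funext e
        rw [ind_empty, eq_symmDiffFamily_iff.1 hr e, Finset.sum_empty]
      obtain ⟨e, he⟩ := edgeBoundary_nonempty hG hS1 hS2
      rw [this] at he
      exact absurd he (Finset.notMem_empty e)
    have hex : ∃ B ∈ ℬ, weight w (edgeBoundary G S) ≤ weight w B := by
      by_contra h
      push_neg at h
      exact hno ⟨ℬ, fun C hC => ⟨h𝒟.1.2.1 C (hs hC), h C hC⟩, hr⟩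
    obtain ⟨B, hBℬ, hwB⟩ := hex
    have hbasis' : IsCutBasis G (insert (edgeBoundary G S) (𝒟.erase B)) :=
      exchange_basis h𝒟.1 (hs hBℬ) ⟨S, hS1, hS2, rfl⟩ hD𝒟 hs
        (eq_symmDiffFamily_iff.1 hr) hBℬ
    have hsum' : ∑ C ∈ insert (edgeBoundary G S) (𝒟.erase B), weight w C
        = weight w (edgeBoundary G S) + (∑ C ∈ 𝒟, weight w C - weight w B) := by
      rw [Finset.sum_insert (fun h => hD𝒟 (Finset.mem_of_mem_erase h))]
      congr 1
      have := Finset.sum_erase_add 𝒟 (weight w) (hs hBℬ)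
      linarith
    refine ⟨insert (edgeBoundary G S) (𝒟.erase B), ⟨hbasis', ?_⟩, Finset.mem_insert_self _ _⟩
    intro 𝒟' h𝒟'
    have h1 := h𝒟.2 𝒟' h𝒟'
    rw [hsum']
    linarith

/-- A cutset `D` of a finite connected simple graph with positive edge weights is
relevant iff it cannot be written as the symmetric difference of finitely many cutsets, each
of weight strictly smaller than that of `D`. -/
theorem relevant_iff_no_decomposition_into_lighter_cuts [Fintype V] [DecidableEq V]
    (G : SimpleGraph V) (hG : G.Connected) (w : Sym2 V → ℝ)
    (hw : ∀ e ∈ G.edgeSet, 0 < w e) (D : Finset (Sym2 V)) (hD : IsCutset G D) :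
    IsRelevant G w D ↔
      ¬ ∃ 𝒮 : Finset (Finset (Sym2 V)),
          (∀ C ∈ 𝒮, IsCutset G C ∧ weight w C < weight w D) ∧
          D = symmDiffFamily 𝒮 id := by
  exact relevant_iff_main G hG w hw D hD
end

section
/- Let G be a finite connected simple graph with positive real edge weights. A cutset D of G is relevant if and only if there exist two distinct vertices u and v of G such that D is a minimum-weight u,v-cut, i.e., D is a u,v-cut and every u,v-cut of G has weight at least the weight of D. -/
/-!
Both directions rest on exchanging one member of a cut basis for another cut: if `C` is the
symmetric difference of a subfamily `ℬ` of a basis `𝒟` and `B ∈ ℬ`, then replacing `B` by `C`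
in `𝒟` gives again a basis.

If `D` is a minimum `u,v`-cut and `ℬ ⊆ 𝒟` represents `D` in a minimum basis `𝒟`, then
some member of `ℬ` separates `u` from `v` (count parities on `{u, v}`), so it is at least as
heavy as `D`, and exchanging it for `D` gives a minimum basis containing `D`.

Conversely let `D = ∂S` belong to a minimum basis `𝒟`. For an even vertex set `Y`, the parity of
`|X ∩ Y|` depends only on `∂X` and is additive, i.e. it is a linear functional on the cut space;
counting shows that some such `Y` is odd on `D` and even on the other members of `𝒟`. If `D`
were not a minimum `u,v`-cut for any `u ≠ v`, every pair `u ∈ S ∩ Y`, `v ∈ Y \ S` would be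
separated by a cut lighter than `D`, and uncrossing these cuts (the cut function is
submodular) yields a cut lighter than `D` that is odd on `Y`, as in Padberg and Rao's odd cut
algorithm. Its representation in `𝒟` must involve `D`, and the exchange contradicts the
minimality of `𝒟`.
-/

open Finset
open scoped Classical

variable {V : Type*}

open scoped symmDiff

section Parity

variable {α : Type*} [DecidableEq α]

lemma odd_card_symmDiff_iff (s t : Finset α) :
    Odd (s ∆ t).card ↔ ¬(Odd s.card ↔ Odd t.card) := by
  have hsub : s ∩ t ⊆ s ∪ t := Finset.inter_subset_left.trans Finset.subset_union_left
  have h₁ := Finset.card_sdiff_add_card_eq_card hsub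
  have h₂ := Finset.card_union_add_card_inter s t
  rw [← show s ∆ t = (s ∪ t) \ (s ∩ t) from symmDiff_eq_sup_sdiff_inf _ _] at h₁
  simp only [Nat.odd_iff]
  omega

lemma odd_card_symmDiff_inter_iff (s t u : Finset α) :
    Odd ((s ∆ t) ∩ u).card ↔ ¬(Odd (s ∩ u).card ↔ Odd (t ∩ u).card) := by
  rw [show (s ∆ t) ∩ u = (s ∩ u) ∆ (t ∩ u) from inf_symmDiff_distrib_right _ _ _,
    odd_card_symmDiff_iff]

lemma odd_card_compl_inter_iff [Fintype α] (s t : Finset α) :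
    Odd (sᶜ ∩ t).card ↔ ¬(Odd (s ∩ t).card ↔ Odd t.card) := by
  have h := Finset.card_sdiff_add_card_inter t s
  rw [Finset.sdiff_eq_inter_compl, Finset.inter_comm t, Finset.inter_comm t] at h
  simp only [Nat.odd_iff]
  omega

lemma odd_card_inter_pair_iff {u v : α} (huv : u ≠ v) (s : Finset α) :
    Odd (s ∩ {u, v}).card ↔ (u ∈ s ↔ v ∉ s) := by
  by_cases hu : u ∈ s <;> by_cases hv : v ∈ s <;>
    simp [Finset.inter_insert_of_mem, Finset.inter_insert_of_notMem, Finset.inter_singleton_of_mem,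
      Finset.inter_singleton_of_notMem, hu, hv, huv]

end Parity

section EdgeBoundary

variable [Fintype V] [DecidableEq V] (G : SimpleGraph V)

lemma mem_edgeBoundary_s3 {X : Finset V} {a b : V} :
    s(a, b) ∈ edgeBoundary G X ↔ G.Adj a b ∧ ¬(a ∈ X ↔ b ∈ X) := by
  simp only [edgeBoundary, Finset.mem_filter, Finset.mem_univ, true_and, SimpleGraph.mem_edgeSet,
    Sym2.eq_iff]
  constructor
  · rintro ⟨hab, u, v, ⟨rfl, rfl⟩ | ⟨rfl, rfl⟩, hu, hv⟩ <;> simp [hab, hu, hv]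
  · rintro ⟨hab, hX⟩
    by_cases ha : a ∈ X
    · exact ⟨hab, a, b, .inl ⟨rfl, rfl⟩, ha, by tauto⟩
    · exact ⟨hab, b, a, .inr ⟨rfl, rfl⟩, by tauto, ha⟩

lemma mem_edgeSet_of_mem_edgeBoundary {X : Finset V} {e : Sym2 V} (he : e ∈ edgeBoundary G X) :
    e ∈ G.edgeSet :=
  (Finset.mem_filter.1 he).2.1

lemma edgeBoundary_symmDiff (X Y : Finset V) :
    edgeBoundary G (X ∆ Y) = edgeBoundary G X ∆ edgeBoundary G Y := by
  ext e
  induction e using Sym2.ind with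
  | _ a b =>
    simp only [Finset.mem_symmDiff, mem_edgeBoundary_s3]
    tauto

lemma edgeBoundary_compl_s3 (X : Finset V) : edgeBoundary G Xᶜ = edgeBoundary G X := by
  ext e
  induction e using Sym2.ind with
  | _ a b =>
    simp only [mem_edgeBoundary_s3, Finset.mem_compl]
    tauto

lemma edgeBoundary_empty : edgeBoundary G (∅ : Finset V) = ∅ := by
  ext e
  induction e using Sym2.ind with
  | _ a b => simp [mem_edgeBoundary_s3]

variable {G}

lemma eq_empty_or_eq_univ_of_edgeBoundary_eq_empty (hG : G.Connected) {X : Finset V}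
    (h : edgeBoundary G X = ∅) : X = ∅ ∨ X = Finset.univ := by
  have hclosed : ∀ {a b : V}, G.Walk a b → a ∈ X → b ∈ X := by
    intro a b p
    induction p with
    | nil => exact id
    | cons hadj _ ih =>
      intro ha
      refine ih (not_not.1 fun hb => ?_)
      have := (mem_edgeBoundary_s3 G (X := X)).2 ⟨hadj, by tauto⟩
      simp [h] at this
  by_contra! hX
  obtain ⟨x, hx⟩ := hX.1
  obtain ⟨y, hy⟩ : ∃ y, y ∉ X := by simpa [Finset.eq_univ_iff_forall] using hX.2
  exact hy (hclosed (hG.preconnected x y).some hx)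

lemma eq_or_eq_compl_of_edgeBoundary_eq (hG : G.Connected) {X Y : Finset V}
    (h : edgeBoundary G X = edgeBoundary G Y) : X = Y ∨ X = Yᶜ := by
  have hXY : edgeBoundary G (X ∆ Y) = ∅ := by
    rw [edgeBoundary_symmDiff, h, symmDiff_self, Finset.bot_eq_empty]
  refine (eq_empty_or_eq_univ_of_edgeBoundary_eq_empty hG hXY).imp
    Finset.symmDiff_eq_empty.1 fun huniv => ?_
  ext x
  have := Finset.eq_univ_iff_forall.1 huniv x
  rw [Finset.mem_symmDiff] at this
  rw [Finset.mem_compl]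
  tauto

lemma edgeBoundary_ne_empty (hG : G.Connected) {X : Finset V} (h₀ : X ≠ ∅)
    (h₁ : X ≠ Finset.univ) : edgeBoundary G X ≠ ∅ :=
  fun h => (eq_empty_or_eq_univ_of_edgeBoundary_eq_empty hG h).elim h₀ h₁

lemma odd_card_inter_congr (hG : G.Connected) {Y : Finset V} (hY : Even Y.card)
    {X X' : Finset V} (h : edgeBoundary G X = edgeBoundary G X') :
    Odd (X ∩ Y).card ↔ Odd (X' ∩ Y).card := by
  rcases eq_or_eq_compl_of_edgeBoundary_eq hG h with rfl | rfl
  · rfl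
  · rw [odd_card_compl_inter_iff, ← Nat.not_even_iff_odd (n := Y.card)]
    tauto

end EdgeBoundary

section Submodularity

variable [Fintype V] [DecidableEq V] {G : SimpleGraph V} {w : Sym2 V → ℝ}

lemma weight_edgeBoundary_inter_add_union_le (hw : ∀ e ∈ G.edgeSet, 0 ≤ w e) (A B : Finset V) :
    weight w (edgeBoundary G (A ∩ B)) + weight w (edgeBoundary G (A ∪ B)) ≤
      weight w (edgeBoundary G A) + weight w (edgeBoundary G B) := by
  have hunion : edgeBoundary G (A ∩ B) ∪ edgeBoundary G (A ∪ B) ⊆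
      edgeBoundary G A ∪ edgeBoundary G B := by
    intro e
    induction e using Sym2.ind with
    | _ a b =>
      simp only [Finset.mem_union, mem_edgeBoundary_s3, Finset.mem_inter]
      tauto
  have hinter : edgeBoundary G (A ∩ B) ∩ edgeBoundary G (A ∪ B) ⊆
      edgeBoundary G A ∩ edgeBoundary G B := by
    intro e
    induction e using Sym2.ind with
    | _ a b =>
      simp only [Finset.mem_union, mem_edgeBoundary_s3, Finset.mem_inter]
      tauto
  have hmono : ∀ {P Q : Finset (Sym2 V)}, P ⊆ Q → Q ⊆ edgeBoundary G A ∪ edgeBoundary G B →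
      weight w P ≤ weight w Q := fun hPQ hQ =>
    Finset.sum_le_sum_of_subset_of_nonneg hPQ fun e he _ => hw e <| by
      rcases Finset.mem_union.1 (hQ he) with he | he <;>
        exact mem_edgeSet_of_mem_edgeBoundary G he
  unfold weight at *
  rw [← Finset.sum_union_inter, ← Finset.sum_union_inter (s₁ := edgeBoundary G A)]
  exact add_le_add (hmono hunion le_rfl)
    (hmono hinter (Finset.inter_subset_left.trans Finset.subset_union_left))

lemma weight_edgeBoundary_inter_lt_or_union_lt (hw : ∀ e ∈ G.edgeSet, 0 ≤ w e) {c : ℝ}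
    {A B : Finset V} (hA : weight w (edgeBoundary G A) < c) (hB : weight w (edgeBoundary G B) < c) :
    weight w (edgeBoundary G (A ∩ B)) < c ∨ weight w (edgeBoundary G (A ∪ B)) < c := by
  by_contra! h
  linarith [weight_edgeBoundary_inter_add_union_le hw A B]

end Submodularity

lemma sum_insert_erase_add {α β : Type*} [DecidableEq α] [AddCommMonoid β] (f : α → β)
    {s : Finset α} {a b : α} (ha : a ∈ s) (hb : b ∉ s) :
    ∑ x ∈ insert b (s.erase a), f x + f a = ∑ x ∈ s, f x + f b := by
  rw [Finset.sum_insert fun h => hb (Finset.mem_of_mem_erase h), add_assoc,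
    Finset.sum_erase_add _ _ ha, add_comm]

section SymmDiffFamily

variable [Fintype V] [DecidableEq V] {ι : Type*} (f : ι → Finset (Sym2 V))

@[simp]
lemma symmDiffFamily_empty : symmDiffFamily ∅ f = ∅ := by
  ext e
  simp [symmDiffFamily]

lemma symmDiffFamily_insert [DecidableEq ι] {a : ι} {s : Finset ι} (ha : a ∉ s) :
    symmDiffFamily (insert a s) f = f a ∆ symmDiffFamily s f := by
  ext e
  simp only [symmDiffFamily, Finset.mem_filter, Finset.mem_univ, true_and, Finset.mem_symmDiff,
    Finset.filter_insert]
  split_ifs with he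
  · rw [Finset.card_insert_of_notMem fun h => ha (Finset.mem_of_mem_filter _ h), Nat.odd_add_one]
    tauto
  · tauto

lemma symmDiffFamily_symmDiff [DecidableEq ι] (s t : Finset ι) :
    symmDiffFamily (s ∆ t) f = symmDiffFamily s f ∆ symmDiffFamily t f := by
  ext e
  have hfilter : (s ∆ t).filter (fun i => e ∈ f i) =
      s.filter (fun i => e ∈ f i) ∆ t.filter (fun i => e ∈ f i) := by
    ext i
    simp only [Finset.mem_filter, Finset.mem_symmDiff]
    tauto
  simp only [symmDiffFamily, Finset.mem_filter, Finset.mem_univ, true_and, Finset.mem_symmDiff,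
    hfilter, odd_card_symmDiff_iff]
  tauto

lemma symmDiffFamily_image [DecidableEq ι] {κ : Type*} {g : κ → ι} {s : Finset κ}
    (hg : Set.InjOn g s) : symmDiffFamily (s.image g) f = symmDiffFamily s (f ∘ g) := by
  ext e
  simp only [symmDiffFamily, Finset.mem_filter, Finset.mem_univ, true_and, Finset.filter_image,
    Function.comp_apply]
  rw [Finset.card_image_of_injOn (hg.mono (Finset.filter_subset _ s))]

end SymmDiffFamily

section CutSpace

variable [Fintype V] [DecidableEq V] {G : SimpleGraph V}

lemma exists_odd_of_edgeBoundary_eq_symmDiffFamily (hG : G.Connected) {Y : Finset V}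
    (hY : Even Y.card) {r : Finset (Sym2 V) → Finset V} {ℬ : Finset (Finset (Sym2 V))}
    (hr : ∀ E ∈ ℬ, E = edgeBoundary G (r E)) {S : Finset V}
    (hS : edgeBoundary G S = symmDiffFamily ℬ id) (hSY : Odd (S ∩ Y).card) :
    ∃ E ∈ ℬ, Odd (r E ∩ Y).card := by
  induction ℬ using Finset.induction_on generalizing S with
  | empty =>
    rw [symmDiffFamily_empty, ← edgeBoundary_empty G] at hS
    simp [odd_card_inter_congr hG hY hS] at hSY
  | insert a ℬ ha ih =>
    by_cases haY : Odd (r a ∩ Y).card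
    · exact ⟨a, Finset.mem_insert_self a ℬ, haY⟩
    have hS' : edgeBoundary G (S ∆ r a) = symmDiffFamily ℬ id := by
      rw [edgeBoundary_symmDiff, hS, symmDiffFamily_insert _ ha, id, ← hr a (ℬ.mem_insert_self a),
        symmDiff_symmDiff_self']
    obtain ⟨E, hE, hEY⟩ := ih (fun E hE => hr E (Finset.mem_insert_of_mem hE)) hS'
      ((odd_card_symmDiff_inter_iff _ _ _).2 (by tauto))
    exact ⟨E, Finset.mem_insert_of_mem hE, hEY⟩

lemma symmDiffFamily_edgeBoundary_singleton (A : Finset V) :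
    symmDiffFamily A (fun v => edgeBoundary G {v}) = edgeBoundary G A := by
  induction A using Finset.induction_on with
  | empty => rw [symmDiffFamily_empty, edgeBoundary_empty]
  | insert a A ha ih =>
    rw [symmDiffFamily_insert _ ha, ih, ← edgeBoundary_symmDiff,
      Finset.symmDiff_eq_union (Finset.disjoint_singleton_left.2 ha), ← Finset.insert_eq]

lemma edgeBoundary_singleton_injOn (hG : G.Connected) (v₀ : V) :
    Set.InjOn (fun v => edgeBoundary G {v}) (Finset.univ.erase v₀ : Finset V) := by
  intro a ha b hb hab
  rcases eq_or_eq_compl_of_edgeBoundary_eq hG hab with h | h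
  · exact Finset.singleton_injective h
  · have : v₀ ∈ ({a} : Finset V) := by
      rw [h, Finset.mem_compl, Finset.mem_singleton]
      exact (Finset.mem_erase.1 hb).1.symm
    exact absurd (Finset.mem_singleton.1 this).symm (Finset.mem_erase.1 ha).1

lemma isCutBasis_image_edgeBoundary_singleton (hG : G.Connected) (v₀ : V) :
    IsCutBasis G ((Finset.univ.erase v₀).image fun v => edgeBoundary G {v}) := by
  have hinj := edgeBoundary_singleton_injOn hG v₀
  have hsum : ∀ A ⊆ Finset.univ.erase v₀,
      symmDiffFamily (A.image fun v => edgeBoundary G {v}) id = edgeBoundary G A := fun A hA => by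
    rw [symmDiffFamily_image _ (hinj.mono hA)]
    exact symmDiffFamily_edgeBoundary_singleton A
  refine ⟨?_, ?_, fun X => ?_, fun ℬ hℬ hne => ?_⟩
  · rw [Finset.card_image_of_injOn hinj, Finset.card_erase_of_mem (Finset.mem_univ _),
      Finset.card_univ]
  · simp only [Finset.mem_image, Finset.mem_erase, Finset.mem_univ, and_true]
    rintro _ ⟨v, hv, rfl⟩
    refine ⟨{v}, Finset.singleton_ne_empty v, fun huniv => ?_, rfl⟩
    exact hv (Finset.mem_singleton.1 (huniv ▸ Finset.mem_univ v₀)).symm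
  · obtain ⟨X', hX'v₀, hX'⟩ : ∃ X', v₀ ∉ X' ∧ edgeBoundary G X' = edgeBoundary G X := by
      by_cases hX : v₀ ∈ X
      · exact ⟨Xᶜ, by simpa using hX, edgeBoundary_compl_s3 G X⟩
      · exact ⟨X, hX, rfl⟩
    have hX'sub : X' ⊆ Finset.univ.erase v₀ := fun x hx =>
      Finset.mem_erase.2 ⟨fun hx' => hX'v₀ (hx' ▸ hx), Finset.mem_univ x⟩
    exact ⟨_, Finset.image_subset_image hX'sub, by rw [hsum X' hX'sub, hX']⟩
  · obtain ⟨A, hA, rfl⟩ := Finset.subset_image_iff.1 hℬ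
    rw [hsum A hA]
    refine edgeBoundary_ne_empty hG (by simpa [← Finset.nonempty_iff_ne_empty] using hne)
      fun huniv => ?_
    exact (Finset.mem_erase.1 (hA (huniv ▸ Finset.mem_univ v₀))).1 rfl

lemma exists_isMinCutBasis (hG : G.Connected) [Nonempty V] (w : Sym2 V → ℝ) :
    ∃ 𝒟, IsMinCutBasis G w 𝒟 := by
  obtain ⟨𝒟, h𝒟, hmin⟩ := Finset.exists_min_image
    (Finset.univ.filter fun 𝒟 => IsCutBasis G 𝒟) (fun 𝒟 => ∑ D ∈ 𝒟, weight w D)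
    ⟨_, Finset.mem_filter.2 ⟨Finset.mem_univ _,
      isCutBasis_image_edgeBoundary_singleton hG (Classical.arbitrary V)⟩⟩
  exact ⟨𝒟, (Finset.mem_filter.1 h𝒟).2, fun 𝒟' h𝒟' => hmin 𝒟' (by simpa using h𝒟')⟩

variable {𝒟 ℬ : Finset (Finset (Sym2 V))} {B C : Finset (Sym2 V)}

lemma IsCutBasis.exchange (hb : IsCutBasis G 𝒟) (hℬ : ℬ ⊆ 𝒟) (hB : B ∈ ℬ) (hC : IsCutset G C)
    (hCℬ : C = symmDiffFamily ℬ id) (hC𝒟 : C ∉ 𝒟) : IsCutBasis G (insert C (𝒟.erase B)) := by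
  obtain ⟨hcard, hcut, hspan, hindep⟩ := hb
  refine ⟨?_, ?_, fun X => ?_, fun 𝒜 h𝒜 hne h𝒜0 => ?_⟩
  · rw [Finset.card_insert_of_notMem fun h => hC𝒟 (Finset.mem_of_mem_erase h),
      Finset.card_erase_of_mem (hℬ hB)]
    have := Finset.card_pos.2 ⟨B, hℬ hB⟩
    omega
  · simp only [Finset.mem_insert, forall_eq_or_imp]
    exact ⟨hC, fun D hD => hcut D (Finset.mem_of_mem_erase hD)⟩
  · obtain ⟨ℬ₀, hℬ₀, hX⟩ := hspan X
    by_cases hB₀ : B ∈ ℬ₀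
    · have hsub : ℬ₀ ∆ ℬ ⊆ 𝒟 := symmDiff_subset_union.trans (Finset.union_subset hℬ₀ hℬ)
      refine ⟨insert C (ℬ₀ ∆ ℬ), Finset.insert_subset_insert _ ?_, ?_⟩
      · exact Finset.subset_erase.2 ⟨hsub, fun h => (Finset.mem_symmDiff.1 h).elim
          (fun h => h.2 hB) (fun h => h.2 hB₀)⟩
      · rw [symmDiffFamily_insert _ fun h => hC𝒟 (hsub h), symmDiffFamily_symmDiff, ← hX, id,
          hCℬ, symmDiff_comm (edgeBoundary G X), symmDiff_symmDiff_cancel_left]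
    · exact ⟨ℬ₀, (Finset.subset_erase.2 ⟨hℬ₀, hB₀⟩).trans (Finset.subset_insert _ _), hX⟩
  · by_cases hC𝒜 : C ∈ 𝒜
    · have hsub : 𝒜.erase C ⊆ 𝒟.erase B := Finset.subset_insert_iff.1 h𝒜
      refine hindep ((𝒜.erase C) ∆ ℬ) ?_ ⟨B, ?_⟩ ?_
      · exact symmDiff_subset_union.trans
          (Finset.union_subset (hsub.trans (Finset.erase_subset _ _)) hℬ)
      · exact Finset.mem_symmDiff.2 (.inr ⟨hB, fun h => (Finset.mem_erase.1 (hsub h)).1 rfl⟩)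
      · rw [← Finset.insert_erase hC𝒜, symmDiffFamily_insert _ (Finset.notMem_erase C 𝒜)] at h𝒜0
        rw [symmDiffFamily_symmDiff, ← hCℬ, ← symmDiff_eq_bot.1 h𝒜0, id, symmDiff_self]
        rfl
    · exact hindep 𝒜 (((Finset.subset_insert_iff_of_notMem hC𝒜).1 h𝒜).trans
        (Finset.erase_subset _ _)) hne h𝒜0

variable {w : Sym2 V → ℝ}

lemma IsMinCutBasis.weight_le_of_exchange (h : IsMinCutBasis G w 𝒟) (hℬ : ℬ ⊆ 𝒟) (hB : B ∈ ℬ)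
    (hC : IsCutset G C) (hCℬ : C = symmDiffFamily ℬ id) (hC𝒟 : C ∉ 𝒟) :
    weight w B ≤ weight w C := by
  have := h.2 _ (h.1.exchange hℬ hB hC hCℬ hC𝒟)
  linarith [sum_insert_erase_add (weight w) (hℬ hB) hC𝒟]

lemma IsMinCutBasis.exchange (h : IsMinCutBasis G w 𝒟) (hℬ : ℬ ⊆ 𝒟) (hB : B ∈ ℬ)
    (hC : IsCutset G C) (hCℬ : C = symmDiffFamily ℬ id) (hC𝒟 : C ∉ 𝒟)
    (hCB : weight w C ≤ weight w B) : IsMinCutBasis G w (insert C (𝒟.erase B)) := by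
  refine ⟨h.1.exchange hℬ hB hC hCℬ hC𝒟, fun 𝒟' h𝒟' => ?_⟩
  linarith [h.2 𝒟' h𝒟', sum_insert_erase_add (weight w) (hℬ hB) hC𝒟]

end CutSpace

section OddCut

variable [Fintype V] [DecidableEq V] {G : SimpleGraph V} {w : Sym2 V → ℝ}

lemma exists_odd_cut_lt (hw : ∀ e ∈ G.edgeSet, 0 ≤ w e) {c : ℝ} {S : Finset V}
    (hsep : ∀ u ∈ S, ∀ v ∉ S, ∃ T, u ∈ T ∧ v ∉ T ∧ weight w (edgeBoundary G T) < c)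
    {Y : Finset V} (hY : Even Y.card) (hSY : Odd (S ∩ Y).card) :
    ∃ T, Odd (T ∩ Y).card ∧ weight w (edgeBoundary G T) < c := by
  induction Y using Finset.strongInduction with
  | H Y ih =>
  obtain ⟨u, hu⟩ : (S ∩ Y).Nonempty := Finset.card_pos.1 hSY.pos
  obtain ⟨v, hv⟩ : (Y \ S).Nonempty := by
    have := Finset.card_sdiff_add_card_inter Y S
    rw [Finset.inter_comm] at this
    rw [← Finset.card_pos]
    simp only [Nat.odd_iff, Nat.even_iff] at hSY hY
    omega
  rw [Finset.mem_inter] at hu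
  rw [Finset.mem_sdiff] at hv
  obtain ⟨T, huT, hvT, hT⟩ := hsep u hu.1 v hv.2
  by_cases hTY : Odd (T ∩ Y).card
  · exact ⟨T, hTY, hT⟩
  -- one side `T₀` of `∂T` still splits `S ∩ Y` oddly, and `T₀ ∩ Y` is a smaller even set
  obtain ⟨T₀, hT₀, hT₀Y, hST₀, hT₀ss⟩ : ∃ T₀, weight w (edgeBoundary G T₀) < c ∧
      ¬Odd (T₀ ∩ Y).card ∧ Odd (S ∩ (T₀ ∩ Y)).card ∧ T₀ ∩ Y ⊂ Y := by
    by_cases hST : Odd (S ∩ (T ∩ Y)).card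
    · exact ⟨T, hT, hTY, hST, ssubset_of_subset_of_ne Finset.inter_subset_right
        fun h => hvT (Finset.mem_inter.1 (h ▸ hv.1)).1⟩
    · refine ⟨Tᶜ, by rwa [edgeBoundary_compl_s3], ?_, ?_, ?_⟩
      · rw [odd_card_compl_inter_iff, ← Nat.not_even_iff_odd (n := Y.card)]
        tauto
      · rw [Finset.inter_left_comm, odd_card_compl_inter_iff]
        rw [Finset.inter_left_comm] at hST
        tauto
      · exact ssubset_of_subset_of_ne Finset.inter_subset_right
          fun h => Finset.mem_compl.1 (Finset.mem_inter.1 (h ▸ hu.2)).1 huT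
  obtain ⟨T', hT'Y₀, hT'⟩ := ih _ hT₀ss (Nat.not_odd_iff_even.1 hT₀Y) hST₀
  by_cases hT'Y : Odd (T' ∩ Y).card
  · exact ⟨T', hT'Y, hT'⟩
  -- uncrossing: both `T₀ ∩ T'` and `T₀ ∪ T'` split `Y` oddly, and by submodularity one is light
  have hinter : Odd ((T₀ ∩ T') ∩ Y).card := by
    rwa [Finset.inter_comm T₀, Finset.inter_assoc]
  have hunion : Odd ((T₀ ∪ T') ∩ Y).card := by
    have := Finset.card_union_add_card_inter (T₀ ∩ Y) (T' ∩ Y)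
    rw [← Finset.union_inter_distrib_right, ← Finset.inter_inter_distrib_right] at this
    rw [Nat.odd_iff] at hinter hT'Y hT₀Y ⊢
    omega
  rcases weight_edgeBoundary_inter_lt_or_union_lt hw hT₀ hT' with h | h
  exacts [⟨_, hinter, h⟩, ⟨_, hunion, h⟩]

end OddCut

section Relevant

variable [Fintype V] [DecidableEq V] {G : SimpleGraph V} {w : Sym2 V → ℝ}
  {𝒟 : Finset (Finset (Sym2 V))} {D : Finset (Sym2 V)}

lemma isCutset_edgeBoundary_of_odd {Y T : Finset V} (hY : Even Y.card)
    (hTY : Odd (T ∩ Y).card) : IsCutset G (edgeBoundary G T) := by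
  refine ⟨T, fun h => ?_, fun h => ?_, rfl⟩
  · simp [h] at hTY
  · rw [h, Finset.univ_inter, ← Nat.not_even_iff_odd] at hTY
    exact hTY hY

lemma isUVCut_edgeBoundary_of_odd {u v : V} (huv : u ≠ v) {X : Finset V}
    (hX : Odd (X ∩ {u, v}).card) : IsUVCut G u v (edgeBoundary G X) := by
  rw [odd_card_inter_pair_iff huv] at hX
  by_cases hu : u ∈ X
  · exact ⟨X, hu, hX.1 hu, rfl⟩
  · exact ⟨Xᶜ, Finset.mem_compl.2 hu, by simpa using (not_congr hX).1 hu,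
      (edgeBoundary_compl_s3 G X).symm⟩

lemma IsCutBasis.exists_dual (hG : G.Connected) (hb : IsCutBasis G 𝒟)
    {r : Finset (Sym2 V) → Finset V} (hr : ∀ E ∈ 𝒟, E = edgeBoundary G (r E)) (hD : D ∈ 𝒟) :
    ∃ Y : Finset V, Even Y.card ∧ ∀ E ∈ 𝒟, (Odd (r E ∩ Y).card ↔ E = D) := by
  let Φ : Finset V → ({E // E ∈ 𝒟} → Bool) × Bool :=
    fun Y => (fun E => decide (Odd (r E.1 ∩ Y).card), decide (Odd Y.card))
  have hinj : Function.Injective Φ := by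
    intro Y Y' hYY'
    simp only [Φ, Prod.mk.injEq, funext_iff, decide_eq_decide, Subtype.forall] at hYY'
    by_contra hne
    obtain ⟨x, hx⟩ := Finset.symmDiff_nonempty.2 hne
    obtain ⟨ℬ, hℬ, hxℬ⟩ := hb.2.2.1 {x}
    have hZ : Even (Y ∆ Y').card := by
      rw [← Nat.not_odd_iff_even, odd_card_symmDiff_iff, not_not]
      exact hYY'.2
    have hxZ : Odd ({x} ∩ Y ∆ Y').card := by
      rw [Finset.singleton_inter_of_mem hx, Finset.card_singleton]
      exact odd_one
    obtain ⟨E, hE, hEZ⟩ := exists_odd_of_edgeBoundary_eq_symmDiffFamily hG hZ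
      (fun E hE => hr E (hℬ hE)) hxℬ hxZ
    rw [show r E ∩ Y ∆ Y' = (r E ∩ Y) ∆ (r E ∩ Y') from inf_symmDiff_distrib_left _ _ _,
      odd_card_symmDiff_iff] at hEZ
    exact hEZ (hYY'.1 E (hℬ hE))
  have hcard : Fintype.card (Finset V) = Fintype.card (({E // E ∈ 𝒟} → Bool) × Bool) := by
    have : 0 < Fintype.card V - 1 := hb.1 ▸ Finset.card_pos.2 ⟨D, hD⟩
    rw [Fintype.card_finset, Fintype.card_prod, Fintype.card_fun, Fintype.card_bool,
      Fintype.card_coe, hb.1, ← pow_succ]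
    congr 1
    omega
  obtain ⟨Y, hY⟩ := ((Fintype.bijective_iff_injective_and_card Φ).2 ⟨hinj, hcard⟩).2
    (fun E => decide (E.1 = D), false)
  simp only [Φ, Prod.mk.injEq, funext_iff, decide_eq_decide, Subtype.forall,
    decide_eq_false_iff_not, Nat.not_odd_iff_even] at hY
  exact ⟨Y, hY.2, hY.1⟩

lemma IsMinCutBasis.exists_isMinUVCut (hG : G.Connected) (hw : ∀ e ∈ G.edgeSet, 0 ≤ w e)
    (h : IsMinCutBasis G w 𝒟) (hD : D ∈ 𝒟) : ∃ u v, u ≠ v ∧ IsMinUVCut G w u v D := by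
  by_contra! hmin
  choose! r _ _ hr using h.1.2.1
  obtain ⟨Y, hY, hYD⟩ := h.1.exists_dual hG hr hD
  have hsep : ∀ u ∈ r D, ∀ v ∉ r D,
      ∃ T, u ∈ T ∧ v ∉ T ∧ weight w (edgeBoundary G T) < weight w D := by
    intro u hu v hv
    have := hmin u v fun h => hv (h ▸ hu)
    simp only [IsMinUVCut, not_and, not_forall, not_le] at this
    obtain ⟨_, ⟨T, huT, hvT, rfl⟩, hT⟩ := this ⟨r D, hu, hv, hr D hD⟩
    exact ⟨T, huT, hvT, hT⟩
  obtain ⟨T, hTY, hT⟩ := exists_odd_cut_lt hw hsep hY ((hYD D hD).2 rfl)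
  obtain ⟨ℬ, hℬ, hTℬ⟩ := h.1.2.2.1 T
  have hDℬ : D ∈ ℬ := by
    obtain ⟨E, hE, hEY⟩ := exists_odd_of_edgeBoundary_eq_symmDiffFamily hG hY
      (fun E hE => hr E (hℬ hE)) hTℬ hTY
    exact (hYD E (hℬ hE)).1 hEY ▸ hE
  have hT𝒟 : edgeBoundary G T ∉ 𝒟 := fun hT𝒟 => by
    have hTD := (hYD _ hT𝒟).1 ((odd_card_inter_congr hG hY (hr _ hT𝒟)).1 hTY)
    exact hT.ne (congrArg (weight w) hTD)
  exact (h.weight_le_of_exchange hℬ hDℬ (isCutset_edgeBoundary_of_odd hY hTY) hTℬ hT𝒟).not_gt hT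

lemma IsMinUVCut.isRelevant (hG : G.Connected) {u v : V} (huv : u ≠ v)
    (h : IsMinUVCut G w u v D) : IsRelevant G w D := by
  have : Nonempty V := ⟨u⟩
  obtain ⟨𝒟, h𝒟⟩ := exists_isMinCutBasis hG w
  by_cases hD : D ∈ 𝒟
  · exact ⟨𝒟, h𝒟, hD⟩
  obtain ⟨S, huS, hvS, rfl⟩ := h.1
  choose! r _ _ hr using h𝒟.1.2.1
  obtain ⟨ℬ, hℬ, hSℬ⟩ := h𝒟.1.2.2.1 S
  have hpair : Even ({u, v} : Finset V).card := by simp [Finset.card_pair huv]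
  obtain ⟨E, hE, hEuv⟩ := exists_odd_of_edgeBoundary_eq_symmDiffFamily hG hpair
    (fun E hE => hr E (hℬ hE)) hSℬ ((odd_card_inter_pair_iff huv S).2 (iff_of_true huS hvS))
  have hEcut : IsUVCut G u v E := hr E (hℬ hE) ▸ isUVCut_edgeBoundary_of_odd huv hEuv
  have hScut : IsCutset G (edgeBoundary G S) :=
    ⟨S, Finset.ne_empty_of_mem huS, fun h => hvS (h ▸ Finset.mem_univ v), rfl⟩
  exact ⟨_, h𝒟.exchange hℬ hE hScut hSℬ hD (h.2 E hEcut), Finset.mem_insert_self _ _⟩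

end Relevant

theorem relevant_iff_min_uv_cut_general [Fintype V] [DecidableEq V] (G : SimpleGraph V)
    (hG : G.Connected) (w : Sym2 V → ℝ) (hw : ∀ e ∈ G.edgeSet, 0 < w e)
    (D : Finset (Sym2 V)) :
    IsRelevant G w D ↔ ∃ u v : V, u ≠ v ∧ IsMinUVCut G w u v D := by
  constructor
  · rintro ⟨𝒟, h𝒟, hD⟩
    exact h𝒟.exists_isMinUVCut hG (fun e he => (hw e he).le) hD
  · rintro ⟨u, v, huv, h⟩
    exact h.isRelevant hG huv

/-- A cutset `D` of a finite connected simple graph with positive edge weights is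
relevant iff it is a minimum-weight `u,v`-cut for some pair of distinct vertices `u, v`. -/
theorem relevant_iff_min_uv_cut [Fintype V] [DecidableEq V] (G : SimpleGraph V)
    (hG : G.Connected) (w : Sym2 V → ℝ) (hw : ∀ e ∈ G.edgeSet, 0 < w e)
    (D : Finset (Sym2 V)) (hD : IsCutset G D) :
    IsRelevant G w D ↔ ∃ u v : V, u ≠ v ∧ IsMinUVCut G w u v D :=
  relevant_iff_min_uv_cut_general G hG w hw D
end
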